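/- For real parameters p and q > 0 and constant c > 0, the function v(x,y,t) = 2q² / cosh²[ q( x - (q² - 3p² - y²/48 - py/2) t - (1/(2q)) ln(c/(2q)) ) ] is a solution of the Johnson equation JE-I (with α² = -1): (v_t + (1/4)v_xxx + (3/2)v v_x + v/(2t))_x = (12/t²) v_yy, for t > 0. -/

import Mathlib

/-- Partial derivative in the first variable. -/
noncomputable def pd1 (u : ℝ → ℝ → ℝ → ℝ) (x y t : ℝ) : ℝ := deriv (fun s => u s y t) x
/-- Partial derivative in the second variable. -/
noncomputable def pd2 (u : ℝ → ℝ → ℝ → ℝ) (x y t : ℝ) : ℝ := deriv (fun s => u x s t) y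
/-- Partial derivative in the third variable. -/
noncomputable def pd3 (u : ℝ → ℝ → ℝ → ℝ) (x y t : ℝ) : ℝ := deriv (fun s => u x y s) t

/-- The one-soliton solution of the Johnson equation JE-I. -/
noncomputable def oneSoliton (p q c : ℝ) : ℝ → ℝ → ℝ → ℝ := fun x y t =>
  2 * q^2 / (Real.cosh (q * (x - (q^2 - 3*p^2 - y^2/48 - p*y/2) * t
      - (1/(2*q)) * Real.log (c/(2*q)))))^2

/-!
Write the soliton as `v = F θ` with profile `F s = 2 q² sech² s` and phase
`θ = q (x - V(y) t - x₀)`, `V(y) = q² - 3p² - y²/48 - p y/2`. Then `∂ₓ = q d/dθ`,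
`∂ₜ = -q V d/dθ` and `∂_y = q t w(y) d/dθ` with `w = -V'`, `w' = 1/24`. In `(12/t²) v_yy`
the `w'`-term equals `q F'/(2t)` and cancels the `x`-derivative of `v/(2t)`; what remains is
`q² F''` times `q² - V - 12 w²`, once `F''''` is eliminated through
`q² F'''' = 4 q² F'' - 6 (F'² + F F'')`, the second derivative of the soliton equation
`q² F'' = 4 q² F - 3 F²`. The dispersion relation `V + 12 w² = q²` finishes it.
-/

open Real
open scoped ContDiff

noncomputable section

def solitonProfile (q s : ℝ) : ℝ := 2 * q ^ 2 / cosh s ^ 2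

def solitonSpeed (p q y : ℝ) : ℝ := q ^ 2 - 3 * p ^ 2 - y ^ 2 / 48 - p * y / 2

def solitonPhase (p q x₀ x y t : ℝ) : ℝ := q * (x - solitonSpeed p q y * t - x₀)

def solitonWave (F : ℝ → ℝ) (p q x₀ : ℝ) : ℝ → ℝ → ℝ → ℝ :=
  fun x y t => F (solitonPhase p q x₀ x y t)

def johnsonLHS (u : ℝ → ℝ → ℝ → ℝ) (x y t : ℝ) : ℝ :=
  pd1 (fun a b τ => pd3 u a b τ + (1 / 4) * pd1 (pd1 (pd1 u)) a b τ
    + (3 / 2) * u a b τ * pd1 u a b τ + u a b τ / (2 * τ)) x y t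

end

theorem ContDiff.hasDerivAt_iterate_deriv {F : ℝ → ℝ} (hF : ContDiff ℝ ∞ F) (n : ℕ)
    (s : ℝ) : HasDerivAt (deriv^[n] F) (deriv^[n + 1] F s) s := by
  rw [Function.iterate_succ_apply']
  exact ((hF.iterate_deriv n).differentiable (by simp) s).hasDerivAt

section Profile

variable (q s : ℝ)

theorem hasDerivAt_solitonProfile :
    HasDerivAt (solitonProfile q) (-4 * q ^ 2 * sinh s / cosh s ^ 3) s := by
  refine ((hasDerivAt_const s (2 * q ^ 2)).fun_div ((hasDerivAt_cosh s).fun_pow 2)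
    (pow_ne_zero 2 (cosh_pos s).ne')).congr_deriv ?_
  field_simp
  ring

theorem contDiff_solitonProfile : ContDiff ℝ ∞ (solitonProfile q) :=
  contDiff_const.div (contDiff_cosh.pow 2) fun s => pow_ne_zero 2 (cosh_pos s).ne'

theorem solitonProfile_ode :
    q ^ 2 * deriv^[2] (solitonProfile q) s
      = 4 * q ^ 2 * solitonProfile q s - 3 * solitonProfile q s ^ 2 := by
  have hderiv : deriv (solitonProfile q) = fun s => -4 * q ^ 2 * sinh s / cosh s ^ 3 :=
    funext fun s => (hasDerivAt_solitonProfile q s).deriv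
  have hderiv₂ : HasDerivAt (fun s => -4 * q ^ 2 * sinh s / cosh s ^ 3)
      (-4 * q ^ 2 * (cosh s ^ 2 - 3 * sinh s ^ 2) / cosh s ^ 4) s := by
    refine (((hasDerivAt_sinh s).const_mul (-4 * q ^ 2)).fun_div ((hasDerivAt_cosh s).fun_pow 3)
      (pow_ne_zero 3 (cosh_pos s).ne')).congr_deriv ?_
    field_simp
    ring
  rw [Function.iterate_succ_apply', Function.iterate_one, hderiv, hderiv₂.deriv, solitonProfile]
  field_simp
  linear_combination 12 * q ^ 4 * sinh_sq s

end Profile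

section Phase

variable {p q x₀ : ℝ}

theorem solitonSpeed_add_twelve_mul_sq (p q y : ℝ) :
    solitonSpeed p q y + 12 * (y / 24 + p / 2) ^ 2 = q ^ 2 := by
  unfold solitonSpeed
  ring

theorem hasDerivAt_solitonSpeed (p q y : ℝ) :
    HasDerivAt (solitonSpeed p q) (-(y / 24 + p / 2)) y := by
  refine ((((hasDerivAt_const y (q ^ 2 - 3 * p ^ 2)).sub ((hasDerivAt_pow 2 y).div_const 48)).sub
    (((hasDerivAt_id y).const_mul p).div_const 2))).congr_deriv ?_
  ring

theorem hasDerivAt_solitonPhase_fst (y t x : ℝ) :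
    HasDerivAt (fun x => solitonPhase p q x₀ x y t) q x :=
  ((((hasDerivAt_id x).sub_const (solitonSpeed p q y * t)).sub_const x₀).const_mul q).congr_deriv
    (mul_one q)

theorem hasDerivAt_solitonPhase_snd (x t y : ℝ) :
    HasDerivAt (fun y => solitonPhase p q x₀ x y t) (q * t * (y / 24 + p / 2)) y := by
  refine ((((hasDerivAt_const y x).sub ((hasDerivAt_solitonSpeed p q y).mul_const t)).sub_const
    x₀).const_mul q).congr_deriv ?_
  ring

theorem hasDerivAt_solitonPhase_thd (x y t : ℝ) :
    HasDerivAt (fun t => solitonPhase p q x₀ x y t) (-(q * solitonSpeed p q y)) t := by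
  refine ((((hasDerivAt_const t x).sub ((hasDerivAt_id t).const_mul (solitonSpeed p q y))).sub_const
    x₀).const_mul q).congr_deriv ?_
  ring

end Phase

section SolitonWave

variable {F : ℝ → ℝ} {p q x₀ : ℝ}

theorem pd1_iterate_solitonWave (hF : ContDiff ℝ ∞ F) (n : ℕ) :
    pd1^[n] (solitonWave F p q x₀)
      = fun x y t => q ^ n * deriv^[n] F (solitonPhase p q x₀ x y t) := by
  induction n with
  | zero => simp only [Function.iterate_zero, id, pow_zero, one_mul]; rfl
  | succ n ih =>
    rw [Function.iterate_succ_apply', ih]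
    funext x y t
    exact (((hF.hasDerivAt_iterate_deriv n _).comp x (hasDerivAt_solitonPhase_fst y t x)).const_mul
      (q ^ n)).deriv.trans (by ring)

theorem pd3_solitonWave (hF : Differentiable ℝ F) :
    pd3 (solitonWave F p q x₀)
      = fun x y t => -(q * solitonSpeed p q y) * deriv F (solitonPhase p q x₀ x y t) := by
  funext x y t
  exact (((hF _).hasDerivAt.comp t (hasDerivAt_solitonPhase_thd x y t)).deriv).trans (mul_comm _ _)

theorem pd2_solitonWave (hF : Differentiable ℝ F) :
    pd2 (solitonWave F p q x₀)
      = fun x y t => q * t * (y / 24 + p / 2) * deriv F (solitonPhase p q x₀ x y t) := by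
  funext x y t
  exact (((hF _).hasDerivAt.comp y (hasDerivAt_solitonPhase_snd x t y)).deriv).trans (mul_comm _ _)

theorem pd2_pd2_solitonWave (hF : ContDiff ℝ ∞ F) (x y t : ℝ) :
    pd2 (pd2 (solitonWave F p q x₀)) x y t
      = q * t / 24 * deriv F (solitonPhase p q x₀ x y t)
        + (q * t * (y / 24 + p / 2)) ^ 2 * deriv^[2] F (solitonPhase p q x₀ x y t) := by
  rw [pd2_solitonWave (hF.differentiable (by simp))]
  have hcoeff : HasDerivAt (fun y => q * t * (y / 24 + p / 2)) (q * t * (1 / 24)) y :=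
    (((hasDerivAt_id y).div_const 24).add_const (p / 2)).const_mul (q * t)
  exact (hcoeff.mul ((hF.hasDerivAt_iterate_deriv 1 _).comp y
    (hasDerivAt_solitonPhase_snd x t y))).deriv.trans
    (by simp only [Function.comp_apply, Function.iterate_one]; ring)


theorem johnsonLHS_solitonWave (hF : ContDiff ℝ ∞ F) (x y t : ℝ) :
    johnsonLHS (solitonWave F p q x₀) x y t
      = q * (-(q * solitonSpeed p q y) * deriv^[2] F (solitonPhase p q x₀ x y t)
        + q ^ 3 / 4 * deriv^[4] F (solitonPhase p q x₀ x y t)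
        + 3 / 2 * q * (deriv F (solitonPhase p q x₀ x y t) ^ 2
          + F (solitonPhase p q x₀ x y t) * deriv^[2] F (solitonPhase p q x₀ x y t))
        + deriv F (solitonPhase p q x₀ x y t) / (2 * t)) := by
  have hpd1 : pd1 (solitonWave F p q x₀) = pd1^[1] (solitonWave F p q x₀) := rfl
  have hpd111 : pd1 (pd1 (pd1 (solitonWave F p q x₀))) = pd1^[3] (solitonWave F p q x₀) := rfl
  rw [johnsonLHS, pd3_solitonWave (hF.differentiable (by simp)), hpd111,
    pd1_iterate_solitonWave hF 3, hpd1, pd1_iterate_solitonWave hF 1]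
  have hd (n : ℕ) : HasDerivAt (fun a => deriv^[n] F (solitonPhase p q x₀ a y t))
      (deriv^[n + 1] F (solitonPhase p q x₀ x y t) * q) x :=
    (hF.hasDerivAt_iterate_deriv n _).comp x (hasDerivAt_solitonPhase_fst y t x)
  exact (((((hd 1).const_mul _).add (((hd 3).const_mul _).const_mul _)).add
    (((hd 0).const_mul _).mul ((hd 1).const_mul _))).add ((hd 0).div_const _)).deriv.trans
    (by simp only [zero_add, Function.iterate_zero_apply, Function.iterate_one]; ring)

theorem iterate_deriv_four_of_solitonODE (hF : ContDiff ℝ ∞ F)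
    (hode : ∀ s, q ^ 2 * deriv^[2] F s = 4 * q ^ 2 * F s - 3 * F s ^ 2) (s : ℝ) :
    q ^ 2 * deriv^[4] F s
      = 4 * q ^ 2 * deriv^[2] F s - 6 * (deriv F s ^ 2 + F s * deriv^[2] F s) := by
  have hd (n : ℕ) (s : ℝ) := hF.hasDerivAt_iterate_deriv n s
  have hode' (s : ℝ) : q ^ 2 * deriv^[3] F s = 4 * q ^ 2 * deriv F s - 6 * F s * deriv F s := by
    have hL := (hd 2 s).const_mul (q ^ 2)
    rw [show (fun s => q ^ 2 * deriv^[2] F s) = _ from funext hode] at hL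
    exact hL.unique ((((hd 0 s).const_mul _).sub (((hd 0 s).fun_pow 2).const_mul 3)).congr_deriv
      (by simp only [zero_add, Function.iterate_zero_apply, Function.iterate_one]; ring))
  have hL := (hd 3 s).const_mul (q ^ 2)
  rw [show (fun s => q ^ 2 * deriv^[3] F s) = _ from funext hode'] at hL
  exact hL.unique ((((hd 1 s).const_mul _).sub (((hd 0 s).const_mul 6).mul (hd 1 s))).congr_deriv
    (by simp only [zero_add, Function.iterate_zero_apply, Function.iterate_one]; ring))

theorem johnsonLHS_solitonWave_eq_of_ode (hF : ContDiff ℝ ∞ F)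
    (hode : ∀ s, q ^ 2 * deriv^[2] F s = 4 * q ^ 2 * F s - 3 * F s ^ 2)
    (x y : ℝ) {t : ℝ} (ht : t ≠ 0) :
    johnsonLHS (solitonWave F p q x₀) x y t
      = 12 / t ^ 2 * pd2 (pd2 (solitonWave F p q x₀)) x y t := by
  rw [johnsonLHS_solitonWave hF, pd2_pd2_solitonWave hF]
  have hode₄ := iterate_deriv_four_of_solitonODE hF hode (solitonPhase p q x₀ x y t)
  have hdisp := solitonSpeed_add_twelve_mul_sq p q y
  field_simp
  linear_combination 2304 * q ^ 2 * t * hode₄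
    - 9216 * q ^ 2 * t * deriv^[2] F (solitonPhase p q x₀ x y t) * hdisp

end SolitonWave

theorem stmt2 (p q c : ℝ) :
    ∀ x y t : ℝ, 0 < t →
      pd1 (fun a b τ =>
          pd3 (oneSoliton p q c) a b τ
          + (1/4) * pd1 (pd1 (pd1 (oneSoliton p q c))) a b τ
          + (3/2) * oneSoliton p q c a b τ * pd1 (oneSoliton p q c) a b τ
          + oneSoliton p q c a b τ / (2 * τ)) x y t
      = (12 / t^2) * pd2 (pd2 (oneSoliton p q c)) x y t :=
  fun x y _ ht => johnsonLHS_solitonWave_eq_of_ode (x₀ := 1 / (2 * q) * log (c / (2 * q)))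
    (contDiff_solitonProfile q) (solitonProfile_ode q) x y ht.ne'
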